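/- Let h be a prime homotopy data triple and let h₁,…,hₙ be prime homotopy data triples with product k. If h is a factor of k, then h is isomorphic to one of the hᵢ. -/

import Mathlib

/-- A homotopy data triple: a finite set `α` (here: a finite type), an involution `τ`
on it, and a subset `S ⊆ α × α × α`. -/
structure HDT where
  carrier : Type
  finite : Finite carrier
  tau : carrier → carrier
  tau_inv : ∀ a, tau (tau a) = a
  S : Set (carrier × carrier × carrier)

namespace HDT

/-- Isomorphism of homotopy data triples. -/
def Iso (f g : HDT) : Prop :=
  ∃ e : f.carrier ≃ g.carrier,
    (∀ a, e (f.tau a) = g.tau (e a)) ∧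
    (∀ a b c, (a, b, c) ∈ f.S ↔ (e a, e b, e c) ∈ g.S)

/-- The restriction of a homotopy data triple to a `τ`-invariant subset `β`:
the triple `(β, τ|β, S ∩ β³)`. -/
def restrict (h : HDT) (β : Set h.carrier) (hβ : ∀ a ∈ β, h.tau a ∈ β) : HDT where
  carrier := { a : h.carrier // a ∈ β }
  finite := by haveI := h.finite; exact Subtype.finite
  tau := fun x => ⟨h.tau x.1, hβ x.1 x.2⟩
  tau_inv := fun x => Subtype.ext (h.tau_inv x.1)
  S := { t | (t.1.1, t.2.1.1, t.2.2.1) ∈ h.S }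

/-- `S` splits along `β`: every triple of `S` lies entirely in `β³` or entirely in
`(α − β)³`. -/
def Splits (h : HDT) (β : Set h.carrier) : Prop :=
  ∀ t ∈ h.S, (t.1 ∈ β ∧ t.2.1 ∈ β ∧ t.2.2 ∈ β) ∨ (t.1 ∉ β ∧ t.2.1 ∉ β ∧ t.2.2 ∉ β)

/-- `k` is a factor of `h`: `k` is (isomorphic to) the restriction of `h` to some
`τ`-invariant subset `β` along which `S` splits. -/
def IsFactorOf (k h : HDT) : Prop :=
  ∃ (β : Set h.carrier) (hβ : ∀ a ∈ β, h.tau a ∈ β),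
    h.Splits β ∧ Iso k (h.restrict β hβ)

/-- A homotopy data triple is composite if it has a proper factor. -/
def IsComposite (h : HDT) : Prop :=
  ∃ β : Set h.carrier,
    (∀ a ∈ β, h.tau a ∈ β) ∧ h.Splits β ∧ β.Nonempty ∧ β ≠ Set.univ

/-- A homotopy data triple is prime if its underlying set is nonempty and it has no
proper factor. -/
def IsPrime (h : HDT) : Prop := Nonempty h.carrier ∧ ¬ h.IsComposite

/-- The product of two homotopy data triples (carried by the disjoint union of the
underlying sets). -/
def prod (f g : HDT) : HDT where
  carrier := f.carrier ⊕ g.carrier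
  finite := by haveI := f.finite; haveI := g.finite; exact inferInstance
  tau := Sum.map f.tau g.tau
  tau_inv := by
    intro a
    cases a with
    | inl x => simp [Sum.map, f.tau_inv]
    | inr x => simp [Sum.map, g.tau_inv]
  S := { t |
    (∃ a b c, (a, b, c) ∈ f.S ∧ t = (Sum.inl a, Sum.inl b, Sum.inl c)) ∨
    (∃ a b c, (a, b, c) ∈ g.S ∧ t = (Sum.inr a, Sum.inr b, Sum.inr c)) }

/-- The unit for the product: the empty homotopy data triple. -/
def unit : HDT where
  carrier := Empty
  finite := inferInstance
  tau := id
  tau_inv := fun a => rfl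
  S := ∅

/-- The product of a finite list of homotopy data triples. -/
def listProd : List HDT → HDT
  | [] => unit
  | h :: t => h.prod (listProd t)

/-!
The left summand of `f.prod g` is a factor, so it cuts the subset `β` underlying any factor
of `f.prod g` into two complementary factors of that factor. If the factor is prime, one of
the two pieces is empty, i.e. `β` lies in a single summand, and the factor is a factor of `f`
or of `g`. By induction on the list, a prime factor of the product is then a factor of one
prime `hᵢ`, and a nonempty factor of a prime is the whole of it.
-/

theorem Iso.symm {f g : HDT} (hfg : f.Iso g) : g.Iso f := by
  obtain ⟨e, he_tau, he_S⟩ := hfg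
  refine ⟨e.symm, fun a => e.injective ?_, fun a b c => ?_⟩
  · rw [Equiv.apply_symm_apply, he_tau, Equiv.apply_symm_apply]
  · simp [he_S]

theorem Iso.trans {f g k : HDT} (hfg : f.Iso g) (hgk : g.Iso k) : f.Iso k := by
  obtain ⟨e, he_tau, he_S⟩ := hfg
  obtain ⟨u, hu_tau, hu_S⟩ := hgk
  exact ⟨e.trans u, fun a => by simp [he_tau, hu_tau], fun a b c => by simp [he_S, hu_S]⟩

theorem Iso.nonempty {f g : HDT} (hfg : f.Iso g) [Nonempty f.carrier] : Nonempty g.carrier :=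
  let ⟨e, _⟩ := hfg
  e.nonempty_congr.mp ‹_›

theorem restrict_univ_iso (h : HDT) (hβ : ∀ a ∈ (Set.univ : Set h.carrier), h.tau a ∈ Set.univ) :
    (h.restrict Set.univ hβ).Iso h :=
  ⟨Equiv.Set.univ _, fun _ => rfl, fun _ _ _ => Iff.rfl⟩

theorem IsComposite.of_iso {f g : HDT} (hfg : f.Iso g) (hg : g.IsComposite) :
    f.IsComposite := by
  obtain ⟨e, he_tau, he_S⟩ := hfg
  obtain ⟨β, hβ, hs, ⟨b, hb⟩, hne⟩ := hg
  refine ⟨e ⁻¹' β, fun a ha => ?_, fun ⟨a, b, c⟩ ht => ?_, ⟨e.symm b, by simpa⟩, ?_⟩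
  · simpa [Set.mem_preimage, he_tau] using hβ _ ha
  · simpa using hs _ ((he_S a b c).1 ht)
  · exact fun huniv => hne (Set.eq_univ_of_forall fun x => by
      simpa using Set.ext_iff.mp huniv (e.symm x))

/-- If `β` met both `γ` and its complement, `γ` would cut out a proper factor of `β`. -/
theorem subset_or_subset_compl_of_not_isComposite {m : HDT} {β γ : Set m.carrier}
    {hβ : ∀ a ∈ β, m.tau a ∈ β} (hprime : ¬ (m.restrict β hβ).IsComposite)
    (hγ : ∀ a ∈ γ, m.tau a ∈ γ) (hs : m.Splits γ) : β ⊆ γ ∨ β ⊆ γᶜ := by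
  by_contra! hmixed
  obtain ⟨⟨a, haβ, haγ⟩, ⟨b, hbβ, hbγ⟩⟩ :=
    And.imp Set.not_subset.mp Set.not_subset.mp hmixed
  refine hprime ⟨{p | p.1 ∈ γ}, fun p hp => hγ _ hp, fun t ht => hs _ ht,
    ⟨⟨b, hbβ⟩, not_not.mp hbγ⟩, fun huniv => ?_⟩
  exact haγ (Set.eq_univ_iff_forall.mp huniv ⟨a, haβ⟩)

structure Embedding (f g : HDT) where
  toFun : f.carrier → g.carrier
  injective : Function.Injective toFun
  map_tau : ∀ a, toFun (f.tau a) = g.tau (toFun a)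
  mem_S_iff : ∀ a b c, (toFun a, toFun b, toFun c) ∈ g.S ↔ (a, b, c) ∈ f.S

theorem Embedding.isFactorOf {f m h : HDT} (φ : f.Embedding m) {β : Set m.carrier}
    {hβ : ∀ a ∈ β, m.tau a ∈ β} (hs : m.Splits β) (hsub : β ⊆ Set.range φ.toFun)
    (hiso : h.Iso (m.restrict β hβ)) : h.IsFactorOf f := by
  have hβ' : ∀ a ∈ φ.toFun ⁻¹' β, f.tau a ∈ φ.toFun ⁻¹' β := fun a ha => by
    simpa [Set.mem_preimage, φ.map_tau] using hβ _ ha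
  have hs' : f.Splits (φ.toFun ⁻¹' β) := fun ⟨a, b, c⟩ ht =>
    hs (φ.toFun a, φ.toFun b, φ.toFun c) ((φ.mem_S_iff a b c).2 ht)
  let ψ : (f.restrict _ hβ').carrier → (m.restrict β hβ).carrier := fun p => ⟨φ.toFun p.1, p.2⟩
  have hψ : Function.Bijective ψ := by
    refine ⟨fun p q hpq => Subtype.ext (φ.injective (congrArg Subtype.val hpq)), ?_⟩
    rintro ⟨_, hb⟩
    obtain ⟨a, rfl⟩ := hsub hb
    exact ⟨⟨a, hb⟩, rfl⟩
  have hrestrict : (f.restrict _ hβ').Iso (m.restrict β hβ) :=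
    ⟨Equiv.ofBijective ψ hψ, fun p => Subtype.ext (φ.map_tau p.1),
      fun a b c => (φ.mem_S_iff a.1 b.1 c.1).symm⟩
  exact ⟨_, hβ', hs', hiso.trans hrestrict.symm⟩

def inlEmbedding (f g : HDT) : f.Embedding (f.prod g) where
  toFun := Sum.inl
  injective := Sum.inl_injective
  map_tau _ := rfl
  mem_S_iff a b c := by
    refine ⟨?_, fun hS => .inl ⟨a, b, c, hS, rfl⟩⟩
    rintro (⟨_, _, _, hS, ⟨⟩⟩ | ⟨_, _, _, -, ⟨⟩⟩)
    exact hS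

def inrEmbedding (f g : HDT) : g.Embedding (f.prod g) where
  toFun := Sum.inr
  injective := Sum.inr_injective
  map_tau _ := rfl
  mem_S_iff a b c := by
    refine ⟨?_, fun hS => .inr ⟨a, b, c, hS, rfl⟩⟩
    rintro (⟨_, _, _, -, ⟨⟩⟩ | ⟨_, _, _, hS, ⟨⟩⟩)
    exact hS

theorem prod_tau_mem_range_inl (f g : HDT) :
    ∀ a ∈ Set.range Sum.inl, (f.prod g).tau a ∈ Set.range Sum.inl := by
  rintro _ ⟨a, rfl⟩
  exact ⟨f.tau a, rfl⟩

theorem prod_splits_range_inl (f g : HDT) : (f.prod g).Splits (Set.range Sum.inl) := by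
  rintro _ (⟨a, b, c, -, rfl⟩ | ⟨a, b, c, -, rfl⟩)
  · exact .inl ⟨⟨a, rfl⟩, ⟨b, rfl⟩, ⟨c, rfl⟩⟩
  · exact .inr ⟨fun ⟨_, h⟩ => Sum.inl_ne_inr h, fun ⟨_, h⟩ => Sum.inl_ne_inr h,
      fun ⟨_, h⟩ => Sum.inl_ne_inr h⟩

theorem IsPrime.isFactorOf_or_of_isFactorOf_prod {h f g : HDT} (hh : h.IsPrime)
    (hfac : h.IsFactorOf (f.prod g)) : h.IsFactorOf f ∨ h.IsFactorOf g := by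
  obtain ⟨β, hβ, hs, hiso⟩ := hfac
  have hprime : ¬ ((f.prod g).restrict β hβ).IsComposite := fun hc => hh.2 (hc.of_iso hiso)
  rcases subset_or_subset_compl_of_not_isComposite hprime (prod_tau_mem_range_inl f g)
    (prod_splits_range_inl f g) with hsub | hsub
  · exact .inl ((inlEmbedding f g).isFactorOf hs hsub hiso)
  · refine .inr ((inrEmbedding f g).isFactorOf hs (fun a ha => ?_) hiso)
    cases a with
    | inl a => exact absurd ⟨a, rfl⟩ (hsub ha)
    | inr b => exact ⟨b, rfl⟩

theorem IsPrime.iso_of_isFactorOf {h x : HDT} (hh : h.IsPrime) (hx : x.IsPrime)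
    (hfac : h.IsFactorOf x) : h.Iso x := by
  obtain ⟨β, hβ, hs, hiso⟩ := hfac
  have : Nonempty h.carrier := hh.1
  have hne : β.Nonempty := Set.nonempty_coe_sort.mp hiso.nonempty
  obtain rfl : β = Set.univ := by
    by_contra hβu
    exact hx.2 ⟨β, hβ, hs, hne, hβu⟩
  exact hiso.trans (restrict_univ_iso x hβ)

end HDT

/-- if a prime `h` is a factor of a product of primes `h₁, …, hₙ`, then `h`
is isomorphic to one of the `hᵢ`. -/
theorem stmt8 (h : HDT) (l : List HDT) (hh : h.IsPrime) (hl : ∀ x ∈ l, x.IsPrime)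
    (hfac : h.IsFactorOf (HDT.listProd l)) :
    ∃ x ∈ l, h.Iso x := by
  induction l with
  | nil =>
    obtain ⟨_, _, -, hiso⟩ := hfac
    have : Nonempty h.carrier := hh.1
    obtain ⟨a⟩ := hiso.nonempty
    exact (a.1 : Empty).elim
  | cons x t ih =>
    rcases hh.isFactorOf_or_of_isFactorOf_prod hfac with hx | ht
    · exact ⟨x, List.mem_cons_self, hh.iso_of_isFactorOf (hl x List.mem_cons_self) hx⟩
    · obtain ⟨y, hy, hiso⟩ := ih (fun z hz => hl z (List.mem_cons_of_mem x hz)) ht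
      exact ⟨y, List.mem_cons_of_mem x hy, hiso⟩
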